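/- Under the hypotheses that Cov(g(Û),g(Û)) = Cov(g(U),g(U)), g(U) is uncorrelated with h(X) and g(Û), h = H is linear, g = φ, and additionally Cov(H X - φ(Û), φ(Û)) = 0, the optimal gain of Z^h = H X - S(φ(Û) - φ(U)) is S = (1/2) I, half the identity operator. -/

import Mathlib

/-!
Write `P = Cov(φ(Û), φ(Û))` and `D = φ(Û) - φ(U)`. The residual condition gives
`Cov(HX, φ(Û)) = P`, and the two uncorrelatedness hypotheses then give `Cov(HX, D) = P` and
`Cov(D, D) = 2P`. Hence, with `Σ = Cov(HX, HX)`,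
`Cov(Zˢ, Zˢ) = Σ - SP - PSᵀ + 2SPSᵀ`, and completing the square around `S₀ = ½ I` gives
`Cov(Zˢ, Zˢ) = Cov(Zˢ⁰, Zˢ⁰) + 2 (S - S₀) P (S - S₀)ᵀ`, whose last term is positive semidefinite.
So `S₀` is optimal even in the Loewner order, in particular for the trace.
-/

open MeasureTheory Matrix

/-- Component-wise mean of a random vector. -/
noncomputable def rmean {Ω : Type*} [MeasureSpace Ω] {ι : Type*}
    (X : Ω → ι → ℝ) : ι → ℝ := fun i => ∫ ω, X ω i

/-- Covariance matrix of two random vectors. -/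
noncomputable def rcov {Ω : Type*} [MeasureSpace Ω] {ι κ : Type*}
    (X : Ω → ι → ℝ) (Y : Ω → κ → ℝ) : Matrix ι κ ℝ :=
  Matrix.of fun i j => ∫ ω, (X ω i - rmean X i) * (Y ω j - rmean Y j)

open ProbabilityTheory

section Covariance

variable {Ω : Type*} [MeasureSpace Ω] {ι κ : Type*} {X X' : Ω → ι → ℝ} {Y Y' : Ω → κ → ℝ}

lemma rcov_apply (X : Ω → ι → ℝ) (Y : Ω → κ → ℝ) (i : ι) (j : κ) :
    rcov X Y i j = covariance (fun ω => X ω i) (fun ω => Y ω j) volume := rfl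

lemma rcov_transpose (X : Ω → ι → ℝ) (Y : Ω → κ → ℝ) : (rcov X Y)ᵀ = rcov Y X := by
  ext i j
  exact covariance_comm _ _

lemma memLp_mulVec {ι' : Type*} [Fintype ι] (A : Matrix ι' ι ℝ)
    (hX : ∀ i, MemLp (fun ω => X ω i) 2) (i : ι') : MemLp (fun ω => (A *ᵥ X ω) i) 2 := by
  simp only [mulVec, dotProduct]
  exact memLp_finsetSum _ fun k _ => (hX k).const_mul (A i k)

variable [IsFiniteMeasure (volume : Measure Ω)]

lemma rcov_sub_left (hX : ∀ i, MemLp (fun ω => X ω i) 2)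
    (hX' : ∀ i, MemLp (fun ω => X' ω i) 2) (hY : ∀ j, MemLp (fun ω => Y ω j) 2) :
    rcov (fun ω => X ω - X' ω) Y = rcov X Y - rcov X' Y := by
  ext i j
  exact covariance_fun_sub_left (hX i) (hX' i) (hY j)

lemma rcov_sub_right (hX : ∀ i, MemLp (fun ω => X ω i) 2)
    (hY : ∀ j, MemLp (fun ω => Y ω j) 2) (hY' : ∀ j, MemLp (fun ω => Y' ω j) 2) :
    rcov X (fun ω => Y ω - Y' ω) = rcov X Y - rcov X Y' := by
  ext i j
  exact covariance_fun_sub_right (hX i) (hY j) (hY' j)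

lemma rcov_mulVec_left {ι' : Type*} [Fintype ι] (A : Matrix ι' ι ℝ)
    (hX : ∀ i, MemLp (fun ω => X ω i) 2) (hY : ∀ j, MemLp (fun ω => Y ω j) 2) :
    rcov (fun ω => A *ᵥ X ω) Y = A * rcov X Y := by
  ext i j
  simp only [rcov_apply, mulVec, dotProduct, mul_apply]
  rw [covariance_fun_sum_left (fun k => (hX k).const_mul (A i k)) (hY j)]
  simp only [covariance_const_mul_left]

lemma rcov_mulVec_right {κ' : Type*} [Fintype κ] (B : Matrix κ' κ ℝ)
    (hX : ∀ i, MemLp (fun ω => X ω i) 2) (hY : ∀ j, MemLp (fun ω => Y ω j) 2) :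
    rcov X (fun ω => B *ᵥ Y ω) = rcov X Y * Bᵀ := by
  rw [← rcov_transpose, rcov_mulVec_left B hY hX, transpose_mul, rcov_transpose]

lemma rcov_sub_mulVec_self [Fintype κ] {D : Ω → κ → ℝ} (S : Matrix κ κ ℝ)
    (hY : ∀ j, MemLp (fun ω => Y ω j) 2) (hD : ∀ j, MemLp (fun ω => D ω j) 2) :
    rcov (fun ω => Y ω - S *ᵥ D ω) (fun ω => Y ω - S *ᵥ D ω)
      = rcov Y Y - S * rcov D Y - rcov Y D * Sᵀ + S * rcov D D * Sᵀ := by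
  have hSD := memLp_mulVec S hD
  have hYSD : ∀ j, MemLp (fun ω => (Y ω - S *ᵥ D ω) j) 2 := fun j => (hY j).sub (hSD j)
  rw [rcov_sub_left hY hSD hYSD, rcov_sub_right hY hY hSD,
    rcov_sub_right hSD hY hSD, rcov_mulVec_left S hD hY, rcov_mulVec_right S hY hD,
    rcov_mulVec_left S hD hSD, rcov_mulVec_right S hD hD, Matrix.mul_assoc]
  abel

end Covariance

section GainCovariance

variable {ι : Type*} [Fintype ι] [DecidableEq ι]

/-- The covariance of `Y - S D` when `Cov(Y, Y) = Q`, `Cov(Y, D) = Cov(D, Y) = P` and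
`Cov(D, D) = 2P`. -/
def gainCov (Q P S : Matrix ι ι ℝ) : Matrix ι ι ℝ :=
  Q - S * P - P * Sᵀ + S * (2 • P) * Sᵀ

lemma gainCov_eq_half_add (Q P S : Matrix ι ι ℝ) :
    gainCov Q P S = gainCov Q P ((1 / 2 : ℝ) • 1)
      + 2 • ((S - (1 / 2 : ℝ) • 1) * P * (S - (1 / 2 : ℝ) • 1)ᵀ) := by
  simp only [gainCov, transpose_sub, transpose_smul, transpose_one, sub_mul, mul_sub,
    smul_mul_assoc, mul_smul_comm, one_mul, mul_one, Matrix.mul_assoc, smul_sub]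
  module

lemma trace_gainCov_half_le {P : Matrix ι ι ℝ} (hP : P.PosSemidef) (Q S : Matrix ι ι ℝ) :
    (gainCov Q P ((1 / 2 : ℝ) • 1)).trace ≤ (gainCov Q P S).trace := by
  have hsq := hP.mul_mul_conjTranspose_same (S - (1 / 2 : ℝ) • 1)
  rw [conjTranspose_eq_transpose_of_trivial] at hsq
  rw [gainCov_eq_half_add Q P S, trace_add, trace_smul]
  have := hsq.trace_nonneg
  simp only [nsmul_eq_mul, Nat.cast_ofNat]
  linarith

end GainCovariance

theorem nonlinear_optimal_gain_half_identity_general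
    {Ω : Type*} [MeasureSpace Ω] [IsProbabilityMeasure (volume : Measure Ω)]
    {n r m : ℕ} (X : Ω → Fin n → ℝ) (Uhat U : Ω → Fin r → ℝ)
    (H : Matrix (Fin m) (Fin n) ℝ) (φ : (Fin r → ℝ) → Fin m → ℝ)
    (hHX : ∀ i, MemLp (fun ω => H.mulVec (X ω) i) 2)
    (hφUhat : ∀ i, MemLp (fun ω => φ (Uhat ω) i) 2)
    (hφU : ∀ i, MemLp (fun ω => φ (U ω) i) 2)
    (huncorr1 : rcov (fun ω => φ (U ω)) (fun ω => H.mulVec (X ω)) = 0)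
    (huncorr2 : rcov (fun ω => φ (U ω)) (fun ω => φ (Uhat ω)) = 0)
    (hcoveq : rcov (fun ω => φ (Uhat ω)) (fun ω => φ (Uhat ω))
              = rcov (fun ω => φ (U ω)) (fun ω => φ (U ω)))
    (hpd : (rcov (fun ω => φ (Uhat ω)) (fun ω => φ (Uhat ω))).PosDef)
    (hres : rcov (fun ω => H.mulVec (X ω) - φ (Uhat ω)) (fun ω => φ (Uhat ω)) = 0)
    (Z : Matrix (Fin m) (Fin m) ℝ → Ω → Fin m → ℝ)
    (hZ : ∀ S ω, Z S ω = H.mulVec (X ω) - S.mulVec (φ (Uhat ω) - φ (U ω))) :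
    ∀ S : Matrix (Fin m) (Fin m) ℝ,
      (rcov (Z ((1 / 2 : ℝ) • (1 : Matrix (Fin m) (Fin m) ℝ)))
            (Z ((1 / 2 : ℝ) • (1 : Matrix (Fin m) (Fin m) ℝ)))).trace
        ≤ (rcov (Z S) (Z S)).trace := by
  intro S
  set Y := fun ω => H *ᵥ X ω
  set V := fun ω => φ (Uhat ω)
  set W := fun ω => φ (U ω)
  set P := rcov V V
  have hY : ∀ i, MemLp (fun ω => Y ω i) 2 := hHX
  have hV : ∀ i, MemLp (fun ω => V ω i) 2 := hφUhat
  have hW : ∀ i, MemLp (fun ω => W ω i) 2 := hφU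
  have hD : ∀ i, MemLp (fun ω => (V ω - W ω) i) 2 := fun i => (hV i).sub (hW i)
  have hPsymm : Pᵀ = P := by simpa using hpd.isHermitian.eq
  have hYV : rcov Y V = P := by
    rwa [rcov_sub_left hY hV hV, sub_eq_zero] at hres
  have hYD : rcov Y (fun ω => V ω - W ω) = P := by
    rw [rcov_sub_right hY hV hW, hYV, ← rcov_transpose, huncorr1, transpose_zero, sub_zero]
  have hDD : rcov (fun ω => V ω - W ω) (fun ω => V ω - W ω) = 2 • P := by
    rw [rcov_sub_left hV hW hD, rcov_sub_right hV hV hW, rcov_sub_right hW hV hW,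
      ← rcov_transpose W V, huncorr2, ← hcoveq, transpose_zero, two_smul]
    abel
  have hcovZ : ∀ T, rcov (Z T) (Z T) = gainCov (rcov Y Y) P T := by
    intro T
    rw [show Z T = fun ω => Y ω - T *ᵥ (V ω - W ω) from funext (hZ T),
      rcov_sub_mulVec_self T hY hD, hDD, ← rcov_transpose Y (fun ω => V ω - W ω), hYD,
      hPsymm, gainCov]
  rw [hcovZ, hcovZ]
  exact trace_gainCov_half_le hpd.posSemidef _ _

/-- **Theorem (optimal gain is half the identity).** With linear `h = H`,
`g = φ`, equal covariances of `φ(Û)` and `φ(U)`, `φ(U)` uncorrelated with `HX`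
and `φ(Û)`, and residual condition `Cov(HX - φ(Û), φ(Û)) = 0`, the gain
minimizing `trace Cov(Zʰ,Zʰ)` for `Zʰ = HX - S(φ(Û)-φ(U))` is `S = (1/2) I`. -/
theorem nonlinear_optimal_gain_half_identity
    {Ω : Type*} [MeasureSpace Ω] [IsProbabilityMeasure (volume : Measure Ω)]
    {n r m : ℕ} (X : Ω → Fin n → ℝ) (Uhat U : Ω → Fin r → ℝ)
    (H : Matrix (Fin m) (Fin n) ℝ) (φ : (Fin r → ℝ) → Fin m → ℝ)
    (hlaw : (volume : Measure Ω).map Uhat = (volume : Measure Ω).map U)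
    (hHX : ∀ i, MemLp (fun ω => H.mulVec (X ω) i) 2)
    (hφUhat : ∀ i, MemLp (fun ω => φ (Uhat ω) i) 2)
    (hφU : ∀ i, MemLp (fun ω => φ (U ω) i) 2)
    (huncorr1 : rcov (fun ω => φ (U ω)) (fun ω => H.mulVec (X ω)) = 0)
    (huncorr2 : rcov (fun ω => φ (U ω)) (fun ω => φ (Uhat ω)) = 0)
    (hcoveq : rcov (fun ω => φ (Uhat ω)) (fun ω => φ (Uhat ω))
              = rcov (fun ω => φ (U ω)) (fun ω => φ (U ω)))
    (hpd : (rcov (fun ω => φ (Uhat ω)) (fun ω => φ (Uhat ω))).PosDef)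
    (hres : rcov (fun ω => H.mulVec (X ω) - φ (Uhat ω)) (fun ω => φ (Uhat ω)) = 0)
    (Z : Matrix (Fin m) (Fin m) ℝ → Ω → Fin m → ℝ)
    (hZ : ∀ S ω, Z S ω = H.mulVec (X ω) - S.mulVec (φ (Uhat ω) - φ (U ω))) :
    ∀ S : Matrix (Fin m) (Fin m) ℝ,
      (rcov (Z ((1 / 2 : ℝ) • (1 : Matrix (Fin m) (Fin m) ℝ)))
            (Z ((1 / 2 : ℝ) • (1 : Matrix (Fin m) (Fin m) ℝ)))).trace
        ≤ (rcov (Z S) (Z S)).trace :=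
  nonlinear_optimal_gain_half_identity_general X Uhat U H φ hHX hφUhat hφU huncorr1 huncorr2 hcoveq
    hpd hres Z hZ
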